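/- arXiv:2010.12206 — 4 statements merged into one kernel-verified Lean document; each statement's English description precedes it below -/
import Mathlib

section
/- For every staircase I ∈ I(n,m) and every i ∈ {0,...,m}, the set J_i = {j ∈ {0,...,n} : i ∈ I_j} is an interval, the collection J = (J_i) is a staircase in I(m,n), and the correspondence I ↦ J is a bijection from I(n,m) to I(m,n). -/
/-- A staircase in `I(n,m)` is encoded by its (weakly increasing) endpoint function
`e : Fin (n+1) → ℕ` with `e (last) = m`; the begin function is `b 0 = 0`, `b j = e (j-1)`.
`stMem e j i` says that `i` belongs to the interval `I_j = {b j, ..., e j}`. -/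
def stMem {n : ℕ} (e : Fin (n + 1) → ℕ) (j : Fin (n + 1)) (i : ℕ) : Prop :=
  (j = 0 ∨ e (j - 1) ≤ i) ∧ i ≤ e j

/-- The transpose endpoint function. -/
def stTr {n : ℕ} (m : ℕ) (e : Fin (n + 1) → ℕ) : Fin (m + 1) → ℕ :=
  fun i => (Finset.univ.filter (fun j' : Fin n => e j'.castSucc ≤ (i : ℕ))).card

lemma st_mem_iff_lt_card {n : ℕ} (p : Fin n → Prop) [DecidablePred p]
    (hp : ∀ a b : Fin n, a ≤ b → p b → p a) (j : Fin n) :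
    p j ↔ (j : ℕ) < (Finset.univ.filter p).card := by
  constructor
  · intro h
    have hsub : Finset.Iic j ⊆ Finset.univ.filter p := fun a ha =>
      Finset.mem_filter.2 ⟨Finset.mem_univ _, hp a j (Finset.mem_Iic.1 ha) h⟩
    have := Finset.card_le_card hsub
    rw [Fin.card_Iic] at this
    omega
  · intro h
    by_contra hpj
    have hsub : Finset.univ.filter p ⊆ Finset.Iio j := by
      intro a ha
      refine Finset.mem_Iio.2 (lt_of_not_ge fun hle => hpj (hp j a hle ?_))
      exact (Finset.mem_filter.1 ha).2
    have := Finset.card_le_card hsub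
    rw [Fin.card_Iio] at this
    omega

lemma stTr_mono {n m : ℕ} (e : Fin (n + 1) → ℕ) : Monotone (stTr m e) := by
  intro i₁ i₂ h
  apply Finset.card_le_card
  intro j' hj'
  simp only [Finset.mem_filter] at *
  exact ⟨hj'.1, le_trans hj'.2 (Fin.le_def.1 h)⟩

lemma stTr_last {n m : ℕ} (e : Fin (n + 1) → ℕ) (he : Monotone e)
    (hl : e (Fin.last n) = m) : stTr m e (Fin.last m) = n := by
  unfold stTr
  have : (Finset.univ.filter (fun j' : Fin n => e j'.castSucc ≤ ((Fin.last m : Fin (m+1)) : ℕ)))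
      = Finset.univ := by
    refine Finset.filter_true_of_mem fun j' _ => ?_
    simp only [Fin.val_last]
    rw [← hl]
    exact he (Fin.le_last _)
  rw [this, Finset.card_univ, Fintype.card_fin]

lemma st_key {n m : ℕ} (e : Fin (n + 1) → ℕ) (he : Monotone e)
    (hl : e (Fin.last n) = m) (j : Fin (n + 1)) (i : Fin (m + 1)) :
    stMem e j (i : ℕ) ↔ stMem (stTr m e) i (j : ℕ) := by
  have hp : ∀ a b : Fin n, a ≤ b → e b.castSucc ≤ (i : ℕ) → e a.castSucc ≤ (i : ℕ) :=
    fun a b hab h => le_trans (he (Fin.castSucc_le_castSucc_iff.2 hab)) h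
  have h1 : (j = 0 ∨ e (j - 1) ≤ (i : ℕ)) ↔ (j : ℕ) ≤ stTr m e i := by
    rcases eq_or_ne j 0 with hj | hj
    · simp [hj]
    · have hj1 : ((j - 1 : Fin (n + 1)) : ℕ) = (j : ℕ) - 1 := by
        rw [Fin.coe_sub_one, if_neg hj]
      have hjn : (j : ℕ) ≤ n := Nat.lt_succ_iff.1 j.isLt
      have hjpos' : 0 < (j : ℕ) := by
        rcases Nat.eq_zero_or_pos (j : ℕ) with h0 | h0
        · exact absurd (Fin.ext h0 : j = 0) hj
        · exact h0
      set k : Fin n := ⟨(j : ℕ) - 1, by omega⟩ with hk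
      have hkc : (j - 1 : Fin (n + 1)) = k.castSucc := by
        apply Fin.ext
        simp [hj1, hk]
      have := st_mem_iff_lt_card (fun j' : Fin n => e j'.castSucc ≤ (i : ℕ)) hp k
      constructor
      · rintro (h | h)
        · exact absurd h hj
        · rw [hkc] at h
          have := this.1 h
          simp only [hk] at this
          unfold stTr
          omega
      · intro h
        refine Or.inr ?_
        rw [hkc]
        refine this.2 ?_
        simp only [hk]
        unfold stTr at h
        omega
  have h2 : ((i : ℕ) ≤ e j) ↔ (i = 0 ∨ stTr m e (i - 1) ≤ (j : ℕ)) := by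
    rcases eq_or_ne i 0 with hi | hi
    · simp [hi]
    · have hi1 : ((i - 1 : Fin (m + 1)) : ℕ) = (i : ℕ) - 1 := by
        rw [Fin.coe_sub_one, if_neg hi]
      have hipos : 0 < (i : ℕ) := by
        rcases Nat.eq_zero_or_pos (i : ℕ) with h0 | h0
        · exact absurd (Fin.ext h0 : i = 0) hi
        · exact h0
      rcases Nat.lt_or_ge (j : ℕ) n with hjn | hjn
      · set k : Fin n := ⟨(j : ℕ), hjn⟩ with hk
        have hkc : k.castSucc = j := Fin.ext rfl
        have hp' : ∀ a b : Fin n, a ≤ b → e b.castSucc ≤ ((i - 1 : Fin (m+1)) : ℕ) →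
            e a.castSucc ≤ ((i - 1 : Fin (m+1)) : ℕ) :=
          fun a b hab h => le_trans (he (Fin.castSucc_le_castSucc_iff.2 hab)) h
        have hkey := st_mem_iff_lt_card
          (fun j' : Fin n => e j'.castSucc ≤ ((i - 1 : Fin (m+1)) : ℕ)) hp' k
        constructor
        · intro h
          refine Or.inr ?_
          by_contra hc
          push_neg at hc
          have : e k.castSucc ≤ ((i - 1 : Fin (m+1)) : ℕ) := by
            refine hkey.2 ?_
            unfold stTr at hc
            simp only [hk]
            omega
          rw [hkc, hi1] at this
          omega
        · rintro (h | h)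
          · exact absurd h hi
          · by_contra hc
            push_neg at hc
            have : e k.castSucc ≤ ((i - 1 : Fin (m+1)) : ℕ) := by
              rw [hkc, hi1]; omega
            have := hkey.1 this
            unfold stTr at h
            simp only [hk] at this
            omega
      · have hjlast : j = Fin.last n := Fin.ext (le_antisymm (Nat.lt_succ_iff.1 j.isLt) hjn)
        have hle : (i : ℕ) ≤ e j := by
          rw [hjlast, hl]
          exact Nat.lt_succ_iff.1 i.isLt
        have hcard : stTr m e (i - 1) ≤ n :=
          le_trans (Finset.card_le_card (Finset.filter_subset _ _))
            (by rw [Finset.card_univ, Fintype.card_fin])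
        exact ⟨fun _ => Or.inr (le_trans hcard hjn), fun _ => hle⟩
  unfold stMem
  rw [h1, h2]
  tauto

lemma st_ext {n m : ℕ} (e e' : Fin (n + 1) → ℕ)
    (he : Monotone e) (hl : e (Fin.last n) = m)
    (he' : Monotone e') (hl' : e' (Fin.last n) = m)
    (h : ∀ (j : Fin (n + 1)) (i : Fin (m + 1)), stMem e j (i : ℕ) ↔ stMem e' j (i : ℕ)) :
    e = e' := by
  have main : ∀ (f g : Fin (n+1) → ℕ), Monotone f → f (Fin.last n) = m →
      Monotone g → g (Fin.last n) = m →
      (∀ (j : Fin (n + 1)) (i : Fin (m + 1)), stMem f j (i : ℕ) → stMem g j (i : ℕ)) →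
      ∀ j, f j ≤ g j := by
    intro f g hf hlf hg hlg hfg j
    have hfj : f j ≤ m := by rw [← hlf]; exact hf (Fin.le_last j)
    set i : Fin (m + 1) := ⟨f j, Nat.lt_succ_of_le hfj⟩ with hi
    have hmem : stMem f j (i : ℕ) := by
      rcases eq_or_ne j 0 with h0 | h0
      · exact ⟨Or.inl h0, le_refl _⟩
      · refine ⟨Or.inr (hf ?_), le_refl _⟩
        rw [Fin.le_def, Fin.coe_sub_one, if_neg h0]
        omega
    exact le_trans (le_of_eq rfl) ((hfg j i hmem).2)
  funext j
  exact le_antisymm (main e e' he hl he' hl' (fun j i => (h j i).1) j)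
    (main e' e he' hl' he hl (fun j i => (h j i).2) j)

/-- For every staircase `I ∈ I(n,m)` and every `i ∈ {0,...,m}`, the set
`J_i = {j : i ∈ I_j}` is an interval, the collection `J = (J_i)` is a staircase in `I(m,n)`,
and `I ↦ J` is a bijection from `I(n,m)` to `I(m,n)`: there is a bijection `Φ` such that
membership transposes, `i ∈ I_j ↔ j ∈ (Φ I)_i`. -/
theorem stmt3 (n m : ℕ) :
    ∃ Φ : {e : Fin (n + 1) → ℕ // Monotone e ∧ e (Fin.last n) = m} ≃
          {e : Fin (m + 1) → ℕ // Monotone e ∧ e (Fin.last m) = n},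
      ∀ (I : {e : Fin (n + 1) → ℕ // Monotone e ∧ e (Fin.last n) = m})
        (j : Fin (n + 1)) (i : Fin (m + 1)),
        stMem I.1 j (i : ℕ) ↔ stMem (Φ I).1 i (j : ℕ) := by
  refine ⟨⟨fun I => ⟨stTr m I.1, stTr_mono I.1, stTr_last I.1 I.2.1 I.2.2⟩,
          fun J => ⟨stTr n J.1, stTr_mono J.1, stTr_last J.1 J.2.1 J.2.2⟩,
          ?_, ?_⟩, ?_⟩
  · intro I
    exact Subtype.ext (st_ext I.1 (stTr n (stTr m I.1)) I.2.1 I.2.2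
      (stTr_mono _) (stTr_last _ (stTr_mono I.1) (stTr_last I.1 I.2.1 I.2.2))
      (fun j i => (st_key I.1 I.2.1 I.2.2 j i).trans
        (st_key (stTr m I.1) (stTr_mono I.1) (stTr_last I.1 I.2.1 I.2.2) i j))).symm
  · intro J
    exact Subtype.ext (st_ext J.1 (stTr m (stTr n J.1)) J.2.1 J.2.2
      (stTr_mono _) (stTr_last _ (stTr_mono J.1) (stTr_last J.1 J.2.1 J.2.2))
      (fun i j => (st_key J.1 J.2.1 J.2.2 i j).trans
        (st_key (stTr n J.1) (stTr_mono J.1) (stTr_last J.1 J.2.1 J.2.2) j i))).symm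
  · intro I j i
    exact st_key I.1 I.2.1 I.2.2 j i
end

section
/- Let K be an n-dimensional finite simplicial complex equipped with a Morse tiling τ. Then the Euler characteristic of K equals the alternating sum over k from 0 to n of (-1)^k times the number of critical tiles of index k used by τ. -/
/-- The set of open faces of the standard Morse tile of dimension `d`, order `k`, whose Morse
face is `{0, ..., c-1}` (empty when `c = 0`): the faces of the `d`-simplex on the vertices
`Fin (d+1)` that are not contained in one of the `k` removed facets (the facets missing the
vertex `j` for `j < k`), nor in the Morse face. -/
def morseTile (d k c : ℕ) : Finset (Finset (Fin (d + 1))) :=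
  Finset.univ.powerset.filter (fun τ =>
    τ.Nonempty ∧ (∀ j : Fin (d + 1), (j : ℕ) < k → j ∈ τ) ∧
      ¬ τ ⊆ Finset.univ.filter (fun j : Fin (d + 1) => (j : ℕ) < c))

/-- The realization of a Morse tile inside a complex with vertices `V`, via an embedding of
its vertex set. -/
def tileImage (V : Type) [DecidableEq V] (d k c : ℕ) (φ : Fin (d + 1) ↪ V) :
    Finset (Finset V) :=
  (morseTile d k c).image (fun τ => τ.image φ)

section Aux
open Finset


/-- Alternating sum over sets squeezed between `L` and `S`. -/
lemma keyA {α : Type*} [DecidableEq α] (L S : Finset α) (hLS : L ⊆ S) :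
    ∑ τ ∈ S.powerset.filter (fun τ => L ⊆ τ), (-1 : ℤ) ^ τ.card =
      if S = L then (-1 : ℤ) ^ L.card else 0 := by
  have h1 : ∑ τ ∈ S.powerset.filter (fun τ => L ⊆ τ), (-1 : ℤ) ^ τ.card
      = ∑ σ ∈ (S \ L).powerset, (-1 : ℤ) ^ (σ.card + L.card) := by
    refine Finset.sum_nbij' (fun τ => τ \ L) (fun σ => σ ∪ L) ?_ ?_ ?_ ?_ ?_
    · intro τ hτ
      simp only [mem_filter, mem_powerset] at hτ ⊢
      exact sdiff_subset_sdiff hτ.1 le_rfl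
    · intro σ hσ
      simp only [mem_filter, mem_powerset] at hσ ⊢
      exact ⟨union_subset (hσ.trans (sdiff_subset)) hLS, subset_union_right⟩
    · intro τ hτ
      simp only [mem_filter, mem_powerset] at hτ
      exact sdiff_union_of_subset hτ.2
    · intro σ hσ
      simp only [mem_powerset] at hσ
      have : Disjoint σ L := disjoint_of_subset_left hσ sdiff_disjoint
      rw [Finset.union_sdiff_cancel_right this]
    · intro τ hτ
      simp only [mem_filter, mem_powerset] at hτ
      rw [card_sdiff_of_subset hτ.2, Nat.sub_add_cancel (card_le_card hτ.2)]
  rw [h1]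
  have h2 : ∑ σ ∈ (S \ L).powerset, (-1 : ℤ) ^ (σ.card + L.card)
      = (∑ σ ∈ (S \ L).powerset, (-1 : ℤ) ^ σ.card) * (-1) ^ L.card := by
    rw [Finset.sum_mul]; congr 1; ext σ; rw [pow_add]
  rw [h2, Finset.sum_powerset_neg_one_pow_card]
  have h3 : S \ L = ∅ ↔ S = L := by
    rw [sdiff_eq_empty_iff_subset]
    exact ⟨fun h => subset_antisymm h hLS, fun h => h.le⟩
  by_cases h : S = L
  · rw [if_pos (h3.mpr h), if_pos h, one_mul]
  · rw [if_neg (fun hh => h (h3.mp hh)), if_neg h, zero_mul]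

lemma cardL (d k : ℕ) (hk : k ≤ d + 1) :
    (Finset.univ.filter (fun j : Fin (d + 1) => (j : ℕ) < k)).card = k := by
  rcases Nat.lt_or_ge k (d + 1) with h | h
  · have he : Finset.univ.filter (fun j : Fin (d + 1) => (j : ℕ) < k)
        = Finset.Iio (⟨k, h⟩ : Fin (d + 1)) := by
      ext j; simp [Fin.lt_def]
    rw [he, Fin.card_Iio]
  · have hk' : k = d + 1 := le_antisymm hk h
    subst hk'
    have he : Finset.univ.filter (fun j : Fin (d + 1) => (j : ℕ) < d + 1)
        = Finset.univ := by
      ext j; simp [j.isLt, Fin.is_le j]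
    rw [he, card_univ, Fintype.card_fin]

lemma morseTile_eq (d k c : ℕ) :
    morseTile d k c = Finset.univ.powerset.filter (fun τ =>
      τ.Nonempty ∧ (Finset.univ.filter (fun j : Fin (d + 1) => (j : ℕ) < k)) ⊆ τ ∧
        ¬ τ ⊆ Finset.univ.filter (fun j : Fin (d + 1) => (j : ℕ) < c)) := by
  unfold morseTile
  apply Finset.filter_congr
  intro τ _
  constructor
  · rintro ⟨h1, h2, h3⟩
    exact ⟨h1, fun j hj => h2 j (Finset.mem_filter.mp hj).2, h3⟩
  · rintro ⟨h1, h2, h3⟩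
    exact ⟨h1, fun j hj => h2 (Finset.mem_filter.mpr ⟨Finset.mem_univ j, hj⟩), h3⟩

lemma morse_sum (d k c : ℕ) (hk : k ≤ d + 1) (hc : c = 0 ∨ (1 ≤ k ∧ k ≤ c ∧ c ≤ d - 1)) :
    ∑ τ ∈ morseTile d k c, (-1 : ℤ) ^ (τ.card - 1) =
      if k = 0 ∧ c = 0 then 1 else if k = d + 1 then (-1 : ℤ) ^ d
        else if c = k then (-1 : ℤ) ^ k else 0 := by
  set L : Finset (Fin (d + 1)) := Finset.univ.filter (fun j => (j : ℕ) < k) with hL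
  set C : Finset (Fin (d + 1)) := Finset.univ.filter (fun j => (j : ℕ) < c) with hC
  have hLcard : L.card = k := cardL d k hk
  -- exponent rewrite on nonempty sets
  have hsum : ∑ τ ∈ morseTile d k c, (-1 : ℤ) ^ (τ.card - 1)
      = -∑ τ ∈ morseTile d k c, (-1 : ℤ) ^ τ.card := by
    rw [← Finset.sum_neg_distrib]
    apply Finset.sum_congr rfl
    intro τ hτ
    rw [morseTile_eq] at hτ
    have hne : τ.Nonempty := (Finset.mem_filter.mp hτ).2.1
    have h1 : 1 ≤ τ.card := Finset.card_pos.mpr hne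
    have : (-1 : ℤ) ^ τ.card = (-1) ^ (τ.card - 1) * (-1) := by
      rw [← pow_succ, Nat.sub_add_cancel h1]
    rw [this]; ring
  rw [hsum, morseTile_eq]
  rcases hc with hc0 | ⟨hk1, hkc, hcd⟩
  · subst hc0
    have hCe : C = ∅ := by ext j; simp [hC]
    have hpred : ∀ τ : Finset (Fin (d + 1)),
        (τ.Nonempty ∧ L ⊆ τ ∧ ¬ τ ⊆ C) ↔ (τ.Nonempty ∧ L ⊆ τ) := by
      intro τ
      rw [hCe, Finset.subset_empty]
      constructor
      · rintro ⟨h1, h2, _⟩; exact ⟨h1, h2⟩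
      · rintro ⟨h1, h2⟩
        exact ⟨h1, h2, fun h => (Finset.nonempty_iff_ne_empty.mp h1) h⟩
    rw [Finset.filter_congr (fun τ _ => hpred τ)]
    rcases Nat.eq_zero_or_pos k with hk0 | hkpos
    · subst hk0
      have hLe : L = ∅ := by ext j; simp [hL]
      have : Finset.univ.powerset.filter
          (fun τ : Finset (Fin (d+1)) => τ.Nonempty ∧ L ⊆ τ)
          = Finset.univ.powerset.filter (fun τ => τ.Nonempty) := by
        apply Finset.filter_congr; intro τ _
        simp [hLe]
      rw [this]
      have hsplit := Finset.sum_filter_add_sum_filter_not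
        (Finset.univ.powerset : Finset (Finset (Fin (d+1))))
        (fun τ => τ.Nonempty) (fun τ => (-1 : ℤ) ^ τ.card)
      have hnot : Finset.univ.powerset.filter
          (fun τ : Finset (Fin (d+1)) => ¬ τ.Nonempty) = {∅} := by
        ext τ; simp [Finset.not_nonempty_iff_eq_empty]
      rw [hnot] at hsplit
      have htot : ∑ τ ∈ (Finset.univ : Finset (Fin (d+1))).powerset,
          (-1 : ℤ) ^ τ.card = 0 :=
        Finset.sum_powerset_neg_one_pow_card_of_nonempty Finset.univ_nonempty
      rw [htot] at hsplit
      simp only [Finset.sum_singleton, Finset.card_empty, pow_zero] at hsplit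
      have : ∑ τ ∈ Finset.univ.powerset.filter
          (fun τ : Finset (Fin (d+1)) => τ.Nonempty), (-1 : ℤ) ^ τ.card = -1 := by
        linarith
      rw [this]
      norm_num
    · have hLne : L.Nonempty := Finset.card_pos.mp (by omega)
      have : Finset.univ.powerset.filter
          (fun τ : Finset (Fin (d+1)) => τ.Nonempty ∧ L ⊆ τ)
          = Finset.univ.powerset.filter (fun τ => L ⊆ τ) := by
        apply Finset.filter_congr; intro τ _
        exact ⟨fun h => h.2, fun h => ⟨hLne.mono h, h⟩⟩
      rw [this, keyA L Finset.univ (Finset.subset_univ L)]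
      have huL : (Finset.univ = L) ↔ k = d + 1 := by
        constructor
        · intro h
          rw [← hLcard, ← h, Finset.card_univ, Fintype.card_fin]
        · intro h
          symm
          apply Finset.eq_univ_of_card
          rw [hLcard, h, Fintype.card_fin]
      by_cases hkd : k = d + 1
      · rw [if_pos (huL.mpr hkd), if_neg (by omega : ¬ (k = 0 ∧ (0:ℕ) = 0)),
          if_pos hkd, hLcard, hkd]
        rw [pow_succ]
        ring
      · rw [if_neg (fun h => hkd (huL.mp h)),
          if_neg (by omega : ¬ (k = 0 ∧ (0:ℕ) = 0)), if_neg hkd,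
          if_neg (by omega : ¬ (0 : ℕ) = k)]
        ring
  · -- c ≥ 1 case
    have hcd1 : c ≤ d + 1 := by omega
    have hCcard : C.card = c := cardL d c hcd1
    have hLC : L ⊆ C := by
      intro j hj
      simp only [hL, hC, Finset.mem_filter] at hj ⊢
      exact ⟨hj.1, lt_of_lt_of_le hj.2 hkc⟩
    have hLne : L.Nonempty := Finset.card_pos.mp (by omega)
    have : Finset.univ.powerset.filter
        (fun τ : Finset (Fin (d+1)) => τ.Nonempty ∧ L ⊆ τ ∧ ¬ τ ⊆ C)
        = Finset.univ.powerset.filter (fun τ => L ⊆ τ ∧ ¬ τ ⊆ C) := by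
      apply Finset.filter_congr; intro τ _
      exact ⟨fun h => h.2, fun h => ⟨hLne.mono h.1, h⟩⟩
    rw [this]
    -- split the sum over {L ⊆ τ}
    have hsplit := Finset.sum_filter_add_sum_filter_not
      (Finset.univ.powerset.filter (fun τ : Finset (Fin (d+1)) => L ⊆ τ))
      (fun τ => τ ⊆ C) (fun τ => (-1 : ℤ) ^ τ.card)
    rw [Finset.filter_filter, Finset.filter_filter] at hsplit
    have huniv : ∑ τ ∈ Finset.univ.powerset.filter
        (fun τ : Finset (Fin (d+1)) => L ⊆ τ), (-1 : ℤ) ^ τ.card = 0 := by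
      rw [keyA L Finset.univ (Finset.subset_univ L)]
      rw [if_neg]
      intro h
      have : (d + 1 : ℕ) = k := by
        rw [← hLcard, ← h, Finset.card_univ, Fintype.card_fin]
      omega
    rw [huniv] at hsplit
    have hsub : Finset.univ.powerset.filter
        (fun τ : Finset (Fin (d+1)) => L ⊆ τ ∧ τ ⊆ C)
        = C.powerset.filter (fun τ => L ⊆ τ) := by
      ext τ
      simp only [Finset.mem_filter, Finset.mem_powerset]
      constructor
      · rintro ⟨_, h2, h3⟩; exact ⟨h3, h2⟩
      · rintro ⟨h1, h2⟩; exact ⟨Finset.subset_univ τ, h2, h1⟩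
    rw [hsub, keyA L C hLC] at hsplit
    have hCL : (C = L) ↔ c = k := by
      constructor
      · intro h; rw [← hCcard, h, hLcard]
      · intro h
        symm
        apply Finset.eq_of_subset_of_card_le hLC
        rw [hCcard, hLcard, h]
    have hkd : ¬ k = d + 1 := by omega
    rw [if_neg (by omega : ¬ (k = 0 ∧ c = 0)), if_neg hkd]
    by_cases hck : c = k
    · rw [if_pos hck]
      rw [if_pos (hCL.mpr hck), hLcard] at hsplit
      have : ∑ τ ∈ Finset.univ.powerset.filter
          (fun τ : Finset (Fin (d+1)) => L ⊆ τ ∧ ¬ τ ⊆ C), (-1 : ℤ) ^ τ.card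
          = -(-1 : ℤ) ^ k := by linarith
      rw [this]; ring
    · rw [if_neg hck]
      rw [if_neg (fun h => hck (hCL.mp h))] at hsplit
      have : ∑ τ ∈ Finset.univ.powerset.filter
          (fun τ : Finset (Fin (d+1)) => L ⊆ τ ∧ ¬ τ ⊆ C), (-1 : ℤ) ^ τ.card
          = 0 := by linarith
      rw [this]; ring

end Aux

/-- Let `K` be an `n`-dimensional finite simplicial complex (given by its finite set of
nonempty simplices) equipped with a Morse tiling `τ`, encoded by a finite family of Morse
tiles of dimensions `dim i ≤ n`, orders `ord i`, Morse faces of cardinality `mf i`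
(`mf i = 0` meaning empty Morse face), embedded in `K` and partitioning it. A tile is
critical iff it is a closed simplex (`ord i = 0`, index `0`), an open simplex
(`ord i = dim i + 1`, index `dim i`), or its Morse face has minimal dimension `ord i - 1`
(`mf i = ord i`, index `ord i`). Then the Euler characteristic of `K` equals
`Σ_{k=0}^{n} (-1)^k c_k(τ)`, where `c_k(τ)` is the number of critical tiles of index `k`. -/
theorem stmt7 (V : Type) [DecidableEq V] (n : ℕ) (ι : Type) [Fintype ι]
    (dim ord mf : ι → ℕ) (φ : ∀ i, Fin (dim i + 1) ↪ V) (K : Finset (Finset V))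
    (hdim : ∀ i, dim i ≤ n)
    (hord : ∀ i, ord i ≤ dim i + 1)
    (hmf : ∀ i, mf i = 0 ∨ (1 ≤ ord i ∧ ord i ≤ mf i ∧ mf i ≤ dim i - 1))
    (hcover : K = Finset.univ.biUnion
      (fun i => tileImage V (dim i) (ord i) (mf i) (φ i)))
    (hdisj : ∀ i j, i ≠ j →
      Disjoint (tileImage V (dim i) (ord i) (mf i) (φ i))
        (tileImage V (dim j) (ord j) (mf j) (φ j))) :
    (∑ s ∈ K, (-1 : ℤ) ^ (s.card - 1)) =
      ∑ k ∈ Finset.range (n + 1), (-1 : ℤ) ^ k *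
        ((Finset.univ.filter (fun i : ι =>
          (ord i = 0 ∨ ord i = dim i + 1 ∨ mf i = ord i) ∧
            (if ord i = dim i + 1 then dim i else ord i) = k)).card : ℤ) := by
  classical
  subst hcover
  rw [Finset.sum_biUnion (fun i _ j _ hij => hdisj i j hij)]
  -- left side: per-tile sums
  have htile : ∀ i, ∑ s ∈ tileImage V (dim i) (ord i) (mf i) (φ i),
      (-1 : ℤ) ^ (s.card - 1)
      = ∑ τ ∈ morseTile (dim i) (ord i) (mf i), (-1 : ℤ) ^ (τ.card - 1) := by
    intro i
    rw [tileImage, Finset.sum_image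
      (fun τ _ σ _ h => Finset.image_injective (φ i).injective h)]
    apply Finset.sum_congr rfl
    intro τ _
    rw [Finset.card_image_of_injective _ (φ i).injective]
  have hLHS : ∑ i : ι, ∑ s ∈ tileImage V (dim i) (ord i) (mf i) (φ i),
      (-1 : ℤ) ^ (s.card - 1)
      = ∑ i : ι, (if (ord i = 0 ∨ ord i = dim i + 1 ∨ mf i = ord i)
          then (-1 : ℤ) ^ (if ord i = dim i + 1 then dim i else ord i) else 0) := by
    apply Finset.sum_congr rfl
    intro i _
    rw [htile i, morse_sum (dim i) (ord i) (mf i) (hord i) (hmf i)]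
    have h1 := hord i
    have h2 := hmf i
    by_cases hcrit : (ord i = 0 ∨ ord i = dim i + 1 ∨ mf i = ord i)
    · rw [if_pos hcrit]
      by_cases ha : ord i = 0 ∧ mf i = 0
      · rw [if_pos ha, if_neg (by omega : ¬ ord i = dim i + 1), ha.1]
        norm_num
      · rw [if_neg ha]
        by_cases hb : ord i = dim i + 1
        · rw [if_pos hb, if_pos hb]
        · rw [if_neg hb, if_neg hb]
          have hc : mf i = ord i := by
            rcases hcrit with h | h | h
            · exfalso; apply ha; refine ⟨h, ?_⟩; omega
            · exact absurd h hb
            · exact h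
          rw [if_pos hc]
    · rw [if_neg hcrit]
      rw [if_neg (by omega : ¬ (ord i = 0 ∧ mf i = 0)),
        if_neg (by omega : ¬ ord i = dim i + 1),
        if_neg (by omega : ¬ mf i = ord i)]
  rw [hLHS]
  -- right side
  have hidx : ∀ i, (ord i = 0 ∨ ord i = dim i + 1 ∨ mf i = ord i) →
      (if ord i = dim i + 1 then dim i else ord i) ∈ Finset.range (n + 1) := by
    intro i hcrit
    rw [Finset.mem_range]
    have h1 := hord i
    have h2 := hmf i
    have h3 := hdim i
    split_ifs with h
    · omega
    · omega
  have hRHS : ∀ k, ((Finset.univ.filter (fun i : ι =>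
      (ord i = 0 ∨ ord i = dim i + 1 ∨ mf i = ord i) ∧
        (if ord i = dim i + 1 then dim i else ord i) = k)).card : ℤ)
      = ∑ i : ι, (if ((ord i = 0 ∨ ord i = dim i + 1 ∨ mf i = ord i) ∧
        (if ord i = dim i + 1 then dim i else ord i) = k) then (1 : ℤ) else 0) := by
    intro k
    rw [Finset.card_filter]
    push_cast
    rfl
  rw [Finset.sum_congr rfl (fun k _ => by rw [hRHS k, Finset.mul_sum] :
    ∀ k ∈ Finset.range (n + 1), _ = ∑ i : ι, (-1 : ℤ) ^ k *
      (if ((ord i = 0 ∨ ord i = dim i + 1 ∨ mf i = ord i) ∧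
        (if ord i = dim i + 1 then dim i else ord i) = k) then (1 : ℤ) else 0))]
  rw [Finset.sum_comm]
  apply Finset.sum_congr rfl
  intro i _
  by_cases hcrit : (ord i = 0 ∨ ord i = dim i + 1 ∨ mf i = ord i)
  · rw [if_pos hcrit]
    have hmem := hidx i hcrit
    have hcong : ∀ k ∈ Finset.range (n + 1),
        ((-1 : ℤ) ^ k * (if ((ord i = 0 ∨ ord i = dim i + 1 ∨ mf i = ord i) ∧
          (if ord i = dim i + 1 then dim i else ord i) = k) then (1 : ℤ) else 0))
        = (if (if ord i = dim i + 1 then dim i else ord i) = k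
            then (-1 : ℤ) ^ k else 0) := by
      intro k _
      by_cases h : (if ord i = dim i + 1 then dim i else ord i) = k
      · rw [if_pos h, if_pos ⟨hcrit, h⟩, mul_one]
      · rw [if_neg h, if_neg (fun hh => h hh.2), mul_zero]
    rw [Finset.sum_congr rfl hcong, Finset.sum_ite_eq (Finset.range (n + 1))
      (if ord i = dim i + 1 then dim i else ord i) (fun k => (-1 : ℤ) ^ k),
      if_pos hmem]
  · rw [if_neg hcrit]
    rw [Finset.sum_congr rfl (fun k _ => by
      rw [if_neg (fun h => hcrit h.1), mul_zero])]
    rw [Finset.sum_const_zero]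
end

section
/- Let n be odd and let h_0, ..., h_{n+1} be real numbers with h_0 = h_{n+1} such that the polynomial identity Σ_{i=0}^{n+1} (h_i - h_{n+1-i}) X^i (X+1)^{n+1-i} = (h_0 - h_{n+1})(1+2X) holds. Then h_i = h_{n+1-i} for all i ∈ {0,...,n+1}. -/
open Polynomial

lemma coeff_term_aux (a : ℝ) (i m k : ℕ) :
    (C a * X ^ i * (X + 1) ^ m).coeff k
      = if i ≤ k then a * ((X + 1 : ℝ[X]) ^ m).coeff (k - i) else 0 := by
  rw [mul_right_comm, coeff_mul_X_pow', coeff_C_mul]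


/-- Odd-dimensional case: if `n` is odd, `h_0 = h_{n+1}`, and the polynomial identity
`Σ_{i=0}^{n+1} (h_i - h_{n+1-i}) X^i (X+1)^{n+1-i} = (h_0 - h_{n+1})(1+2X)` holds, then
`h_i = h_{n+1-i}` for all `i ∈ {0,...,n+1}` (the h-vector is palindromic). -/
theorem stmt8 (n : ℕ) (hn : Odd n) (h : ℕ → ℝ) (h0 : h 0 = h (n + 1))
    (hp : ∑ i ∈ Finset.range (n + 2),
        (C (h i - h (n + 1 - i)) * X ^ i * (X + 1) ^ (n + 1 - i))
      = C (h 0 - h (n + 1)) * (1 + 2 * X)) :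
    ∀ i ≤ n + 1, h i = h (n + 1 - i) := by
  have hp0 : ∑ i ∈ Finset.range (n + 2),
      (C (h i - h (n + 1 - i)) * X ^ i * (X + 1) ^ (n + 1 - i)) = 0 := by
    rw [hp, h0]; simp
  have key : ∀ k, k ≤ n + 1 → h k - h (n + 1 - k) = 0 := by
    intro k
    induction k using Nat.strong_induction_on with
    | _ k ih =>
      intro hk
      have hc := congrArg (fun p => p.coeff k) hp0
      simp only [finset_sum_coeff, coeff_term_aux, coeff_zero] at hc
      rw [Finset.sum_eq_single k] at hc
      · have h1 : ((X + 1 : ℝ[X]) ^ (n + 1 - k)).coeff 0 = 1 := by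
          simp [coeff_zero_eq_eval_zero]
        rw [if_pos le_rfl, Nat.sub_self, h1, mul_one] at hc
        exact hc
      · intro i hi hik
        rcases lt_or_gt_of_ne hik with hlt | hgt
        · rw [ih i hlt (by omega)]
          simp
        · rw [if_neg (by omega)]
      · intro hcontra
        exact absurd (Finset.mem_range.mpr (by omega)) hcontra
  intro i hi
  have := key i hi
  linarith
end

section
/- Let n be even and suppose real numbers h_0,...,h_{n+1} satisfy Σ_{i=0}^{n+1}(h_i - h_{n+1-i}) X^i (X+1)^{n+1-i} = h_0 - h_{n+1} as polynomials. Then for every i ∈ {0,...,n+1}, h_i - h_{n+1-i} = (-1)^i C(n+1,i) (h_0 - h_{n+1}). -/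
open Polynomial

/-- Even-dimensional case: if `n` is even and
`Σ_{i=0}^{n+1} (h_i - h_{n+1-i}) X^i (X+1)^{n+1-i} = h_0 - h_{n+1}` as polynomials, then for
every `i ∈ {0,...,n+1}`, `h_i - h_{n+1-i} = (-1)^i C(n+1,i) (h_0 - h_{n+1})`. -/
theorem stmt10 (n : ℕ) (hn : Even n) (h : ℕ → ℝ)
    (hp : ∑ i ∈ Finset.range (n + 2),
        (C (h i - h (n + 1 - i)) * X ^ i * (X + 1) ^ (n + 1 - i))
      = C (h 0 - h (n + 1))) :
    ∀ i ≤ n + 1,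
      h i - h (n + 1 - i) = (-1 : ℝ) ^ i * ((n + 1).choose i : ℝ) * (h 0 - h (n + 1)) := by
  set c : ℕ → ℝ := fun i => h i - h (n + 1 - i) with hc
  set a : ℝ := h 0 - h (n + 1) with ha
  -- extract coefficients from the polynomial identity
  have key : ∀ k, (∑ i ∈ Finset.range (n + 2),
      c i * (if i ≤ k then (((n + 1 - i).choose (k - i) : ℝ)) else 0))
      = if k = 0 then a else 0 := by
    intro k
    have := congrArg (fun p => Polynomial.coeff p k) hp
    simp only [finset_sum_coeff, coeff_C] at this
    rw [← this]
    apply Finset.sum_congr rfl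
    intro i _
    rw [mul_assoc, mul_comm (X ^ i), ← mul_assoc, coeff_mul_X_pow', coeff_C_mul]
    by_cases hik : i ≤ k
    · simp [hik, coeff_X_add_one_pow, hc]
    · simp [hik, hc]
  -- the triangular system determines the coefficients
  intro i hi
  induction i using Nat.strong_induction_on with
  | _ k ih =>
    have hkey := key k
    -- restrict the sum to range (k+1)
    have hsub : Finset.range (k + 1) ⊆ Finset.range (n + 2) := by
      apply Finset.range_subset_range.mpr; omega
    rw [← Finset.sum_subset hsub (by
      intro i _ hi2
      simp only [Finset.mem_range, not_lt] at hi2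
      rw [if_neg (by omega), mul_zero])] at hkey
    rw [Finset.sum_range_succ] at hkey
    rw [if_pos le_rfl, Nat.sub_self, Nat.choose_zero_right] at hkey
    simp only [Nat.cast_one, mul_one] at hkey
    -- use the induction hypothesis on earlier terms
    have hsum : ∑ i ∈ Finset.range k, c i * (if i ≤ k then (((n + 1 - i).choose (k - i) : ℝ)) else 0)
        = ∑ i ∈ Finset.range k,
          ((-1 : ℝ) ^ i * ((n + 1).choose i : ℝ) * a) * (((n + 1 - i).choose (k - i) : ℝ)) := by
      apply Finset.sum_congr rfl
      intro i hi2
      simp only [Finset.mem_range] at hi2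
      rw [if_pos (by omega), show c i = h i - h (n + 1 - i) from rfl, ih i hi2 (by omega)]
    rw [hsum] at hkey
    -- now solve for c k
    have hck : c k = (if k = 0 then a else 0)
        - ∑ i ∈ Finset.range k,
          ((-1 : ℝ) ^ i * ((n + 1).choose i : ℝ) * a) * (((n + 1 - i).choose (k - i) : ℝ)) := by
      linarith [hkey]
    have hgoal : h k - h (n + 1 - k) = c k := rfl
    rw [hgoal]
    rcases Nat.eq_zero_or_pos k with rfl | hkpos
    · simpa using hck
    · rw [if_neg (by omega), zero_sub] at hck
      rw [hck]
      -- reduce to the alternating sum of binomial coefficients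
      have hchoose : ∀ i ∈ Finset.range k,
          ((n + 1).choose i : ℝ) * (((n + 1 - i).choose (k - i) : ℝ))
          = ((n + 1).choose k : ℝ) * ((k.choose i : ℝ)) := by
        intro i hi2
        simp only [Finset.mem_range] at hi2
        have := Nat.choose_mul (n := n + 1) (k := k) (s := i) (by omega)
        exact_mod_cast this.symm
      have hsum2 : ∑ i ∈ Finset.range k,
          ((-1 : ℝ) ^ i * ((n + 1).choose i : ℝ) * a) * (((n + 1 - i).choose (k - i) : ℝ))
          = ((n + 1).choose k : ℝ) * a * ∑ i ∈ Finset.range k, (-1 : ℝ) ^ i * (k.choose i : ℝ) := by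
        rw [Finset.mul_sum]
        apply Finset.sum_congr rfl
        intro i hi2
        have h2 : (-1 : ℝ) ^ i * ((n + 1).choose i : ℝ) * a * (((n + 1 - i).choose (k - i) : ℝ))
            = (-1 : ℝ) ^ i * a * (((n + 1).choose i : ℝ) * (((n + 1 - i).choose (k - i) : ℝ))) := by
          ring
        rw [h2, hchoose i hi2]
        ring
      rw [hsum2]
      -- alternating sum over range (k+1) is zero
      have halt : (∑ i ∈ Finset.range (k + 1), (-1 : ℤ) ^ i * (k.choose i : ℤ)) = 0 :=
        Int.alternating_sum_range_choose_of_ne (by omega)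
      have halt' : (∑ i ∈ Finset.range (k + 1), (-1 : ℝ) ^ i * (k.choose i : ℝ)) = 0 := by
        exact_mod_cast congrArg (fun z : ℤ => (z : ℝ)) halt
      rw [Finset.sum_range_succ, Nat.choose_self] at halt'
      have : ∑ i ∈ Finset.range k, (-1 : ℝ) ^ i * (k.choose i : ℝ) = -(-1 : ℝ) ^ k := by
        simp only [Nat.cast_one, mul_one] at halt'
        linarith
      rw [this]
      ring
end
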